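/- Matrix representation: for all A, B ∈ 𝒱 with d(A) = m and d(B) = n, and any m×n-shaped matrix M (n rows, m columns) over S, there exists a closed proof t of A ⇒ B such that for every vector u ∈ Sᵐ, ⟦t applied to the canonical proof of A denoting u⟧ = M u. -/

import Mathlib

set_option autoImplicit true
set_option maxHeartbeats 1000000

namespace LS

/-- Propositions of the L^S-logic. -/
inductive Prp where
  | top | bot
  | imp (A B : Prp) | conj (A B : Prp) | disj (A B : Prp)
deriving DecidableEq

/-- Proof-terms of the L^S-calculus over a type of scalars `S`. -/
inductive Tm (S : Type) where
  | var (x : ℕ)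
  | sum (t u : Tm S)
  | scal (a : S) (t : Tm S)
  | star (a : S)
  | elimTop (t u : Tm S)
  | elimBot (t : Tm S)
  | lam (x : ℕ) (t : Tm S)
  | app (t u : Tm S)
  | pair (t u : Tm S)
  | elimConj1 (t : Tm S) (x : ℕ) (u : Tm S)
  | elimConj2 (t : Tm S) (x : ℕ) (u : Tm S)
  | inl (t : Tm S) | inr (t : Tm S)
  | elimDisj (t : Tm S) (x : ℕ) (u : Tm S) (y : ℕ) (v : Tm S)

namespace Tm

variable {S : Type}

/-- Free variables. -/
def fv : Tm S → Finset ℕ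
  | .var x => {x}
  | .sum t u => fv t ∪ fv u
  | .scal _ t => fv t
  | .star _ => ∅
  | .elimTop t u => fv t ∪ fv u
  | .elimBot t => fv t
  | .lam x t => fv t \ {x}
  | .app t u => fv t ∪ fv u
  | .pair t u => fv t ∪ fv u
  | .elimConj1 t x u => fv t ∪ (fv u \ {x})
  | .elimConj2 t x u => fv t ∪ (fv u \ {x})
  | .inl t => fv t
  | .inr t => fv t
  | .elimDisj t x u y v => fv t ∪ (fv u \ {x}) ∪ (fv v \ {y})

/-- Substitution `(u/x)t`. -/
def subst (u : Tm S) (x : ℕ) : Tm S → Tm S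
  | .var y => if y = x then u else .var y
  | .sum t₁ t₂ => .sum (subst u x t₁) (subst u x t₂)
  | .scal a t => .scal a (subst u x t)
  | .star a => .star a
  | .elimTop t₁ t₂ => .elimTop (subst u x t₁) (subst u x t₂)
  | .elimBot t => .elimBot (subst u x t)
  | .lam y t => if y = x then .lam y t else .lam y (subst u x t)
  | .app t₁ t₂ => .app (subst u x t₁) (subst u x t₂)
  | .pair t₁ t₂ => .pair (subst u x t₁) (subst u x t₂)
  | .elimConj1 t y r => .elimConj1 (subst u x t) y (if y = x then r else subst u x r)
  | .elimConj2 t y r => .elimConj2 (subst u x t) y (if y = x then r else subst u x r)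
  | .inl t => .inl (subst u x t)
  | .inr t => .inr (subst u x t)
  | .elimDisj t y r z s =>
      .elimDisj (subst u x t) y (if y = x then r else subst u x r)
        z (if z = x then s else subst u x s)

end Tm

/-- Linear typing contexts: multisets of named hypotheses (exchange is built in). -/
abbrev Ctx : Type := Multiset (ℕ × Prp)

/-- The linear typing judgment of the L^S-calculus. -/
inductive Types {S : Type} : Ctx → Tm S → Prp → Prop
  | ax (x : ℕ) (A : Prp) : Types {(x, A)} (.var x) A
  | sum : Types Γ t A → Types Γ u A → Types Γ (.sum t u) A
  | scal (a : S) : Types Γ t A → Types Γ (.scal a t) A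
  | star (a : S) : Types 0 (.star a) .top
  | elimTop : Types Γ t .top → Types Δ u A → Types (Γ + Δ) (.elimTop t u) A
  | elimBot : Types Γ t .bot → Types (Γ + Δ) (.elimBot t) C
  | lam : Types ((x, A) ::ₘ Γ) t B → Types Γ (.lam x t) (.imp A B)
  | app : Types Γ t (.imp A B) → Types Δ u A → Types (Γ + Δ) (.app t u) B
  | pair : Types Γ t A → Types Γ u B → Types Γ (.pair t u) (.conj A B)
  | elimConj1 : Types Γ t (.conj A B) → Types ((x, A) ::ₘ Δ) u C →
      Types (Γ + Δ) (.elimConj1 t x u) C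
  | elimConj2 : Types Γ t (.conj A B) → Types ((x, B) ::ₘ Δ) u C →
      Types (Γ + Δ) (.elimConj2 t x u) C
  | inl : Types Γ t A → Types Γ (.inl t) (.disj A B)
  | inr : Types Γ t B → Types Γ (.inr t) (.disj A B)
  | elimDisj : Types Γ t (.disj A B) → Types ((x, A) ::ₘ Δ) u C →
      Types ((y, B) ::ₘ Δ) v C → Types (Γ + Δ) (.elimDisj t x u y v) C

variable {S : Type} [Field S]

/-- One-step reduction of the L^S-calculus (root rules plus congruence). -/
inductive Red : Tm S → Tm S → Prop
  | elimTopStar : Red (.elimTop (.star a) t) (.scal a t)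
  | beta : Red (.app (.lam x t) u) (Tm.subst u x t)
  | elimConj1Pair : Red (.elimConj1 (.pair t u) x v) (Tm.subst t x v)
  | elimConj2Pair : Red (.elimConj2 (.pair t u) x v) (Tm.subst u x v)
  | elimDisjInl : Red (.elimDisj (.inl t) x v y w) (Tm.subst t x v)
  | elimDisjInr : Red (.elimDisj (.inr u) x v y w) (Tm.subst u y w)
  | sumStar : Red (.sum (.star a) (.star b)) (.star (a + b))
  | sumLam : Red (.sum (.lam x t) (.lam x u)) (.lam x (.sum t u))
  | sumPair : Red (.sum (.pair t u) (.pair v w)) (.pair (.sum t v) (.sum u w))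
  | elimDisjSum : Red (.elimDisj (.sum t u) x v y w)
      (.sum (.elimDisj t x v y w) (.elimDisj u x v y w))
  | scalStar : Red (.scal a (.star b)) (.star (a * b))
  | scalLam : Red (.scal a (.lam x t)) (.lam x (.scal a t))
  | scalPair : Red (.scal a (.pair t u)) (.pair (.scal a t) (.scal a u))
  | elimDisjScal : Red (.elimDisj (.scal a t) x v y w) (.scal a (.elimDisj t x v y w))
  -- congruence rules
  | sumL : Red t t' → Red (.sum t u) (.sum t' u)
  | sumR : Red u u' → Red (.sum t u) (.sum t u')
  | scalC : Red t t' → Red (.scal a t) (.scal a t')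
  | elimTopL : Red t t' → Red (.elimTop t u) (.elimTop t' u)
  | elimTopR : Red u u' → Red (.elimTop t u) (.elimTop t u')
  | elimBotC : Red t t' → Red (.elimBot t) (.elimBot t')
  | lamC : Red t t' → Red (.lam x t) (.lam x t')
  | appL : Red t t' → Red (.app t u) (.app t' u)
  | appR : Red u u' → Red (.app t u) (.app t u')
  | pairL : Red t t' → Red (.pair t u) (.pair t' u)
  | pairR : Red u u' → Red (.pair t u) (.pair t u')
  | elimConj1L : Red t t' → Red (.elimConj1 t x u) (.elimConj1 t' x u)
  | elimConj1R : Red u u' → Red (.elimConj1 t x u) (.elimConj1 t x u')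
  | elimConj2L : Red t t' → Red (.elimConj2 t x u) (.elimConj2 t' x u)
  | elimConj2R : Red u u' → Red (.elimConj2 t x u) (.elimConj2 t x u')
  | inlC : Red t t' → Red (.inl t) (.inl t')
  | inrC : Red t t' → Red (.inr t) (.inr t')
  | elimDisjL : Red t t' → Red (.elimDisj t x u y v) (.elimDisj t' x u y v)
  | elimDisjM : Red u u' → Red (.elimDisj t x u y v) (.elimDisj t x u' y v)
  | elimDisjR : Red v v' → Red (.elimDisj t x u y v) (.elimDisj t x u y v')

/-- Multi-step reduction. -/
abbrev Reds : Tm S → Tm S → Prop := Relation.ReflTransGen Red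

/-- Convertibility: the reflexive-symmetric-transitive closure of reduction. -/
abbrev Conv : Tm S → Tm S → Prop := Relation.EqvGen Red

/-- A proof-term is irreducible when no reduction applies (congruence included). -/
def Irreducible (t : Tm S) : Prop := ∀ u, ¬ Red t u

/-- A proof-term is closed when it has no free variables. -/
def Closed (t : Tm S) : Prop := t.fv = ∅

/-- The set 𝒱 of propositions generated by ⊤ and closed under ∧. -/
inductive InV : Prp → Prop
  | top : InV .top
  | conj : InV A → InV B → InV (.conj A B)

/-- Dimension of a proposition of 𝒱 (number of occurrences of ⊤). -/
def dim : Prp → ℕ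
  | .top => 1
  | .conj A B => dim A + dim B
  | _ => 0

/-- The zero vector proof 0_A of a proposition A ∈ 𝒱. -/
def zeroPf (S : Type) [Field S] : Prp → Tm S
  | .conj A B => .pair (zeroPf S A) (zeroPf S B)
  | _ => .star 0

/-- `NegOf A t n` : `n` is the additive inverse −t of the closed proof `t` of `A ∈ 𝒱`. -/
inductive NegOf : Prp → Tm S → Tm S → Prop
  | top : Reds t (.star a) → NegOf .top t (.star (-a))
  | conj : Reds t (.pair t₁ t₂) → NegOf A t₁ n₁ → NegOf B t₂ n₂ →
      NegOf (.conj A B) t (.pair n₁ n₂)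

/-- Denotation of irreducible proofs of propositions of 𝒱 as vectors (lists of scalars). -/
inductive Denotes : Tm S → List S → Prop
  | star (a : S) : Denotes (.star a) [a]
  | pair : Denotes t xs → Denotes u ys → Denotes (.pair t u) (xs ++ ys)

/-- `Den t xs` : the closed proof `t` denotes the vector `xs` (via its irreducible form). -/
def Den (t : Tm S) (xs : List S) : Prop := ∃ t', Reds t t' ∧ Denotes t' xs

/-- The canonical (irreducible) proof of `A ∈ 𝒱` denoting a given vector. -/
def canon : Prp → List S → Tm S
  | .conj A B, l => .pair (canon A (l.take (dim A))) (canon B (l.drop (dim A)))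
  | _, l => .star (l.headD 0)

/-- The size function μ on proof-terms. -/
def mu : Tm S → ℕ
  | .var _ => 0
  | .sum t u => 1 + max (mu t) (mu u)
  | .scal _ t => 1 + mu t
  | .star _ => 1
  | .elimTop t u => 1 + mu t + mu u
  | .elimBot t => 1 + mu t
  | .lam _ t => 1 + mu t
  | .app t u => 1 + mu t + mu u
  | .pair t u => 1 + max (mu t) (mu u)
  | .elimConj1 t _ u => 1 + mu t + mu u
  | .elimConj2 t _ u => 1 + mu t + mu u
  | .inl t => 1 + mu t
  | .inr t => 1 + mu t
  | .elimDisj t _ u _ v => 1 + mu t + max (mu u) (mu v)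

/-- Elimination contexts. -/
inductive ECtx (S : Type) where
  | hole
  | elimTop (K : ECtx S) (u : Tm S)
  | elimBot (K : ECtx S)
  | app (K : ECtx S) (t : Tm S)
  | elimConj1 (K : ECtx S) (x : ℕ) (r : Tm S)
  | elimConj2 (K : ECtx S) (x : ℕ) (r : Tm S)
  | elimDisj (K : ECtx S) (x : ℕ) (r : Tm S) (y : ℕ) (s : Tm S)

namespace ECtx

/-- Plugging a proof-term into the hole of an elimination context. -/
def fill : ECtx S → Tm S → Tm S
  | .hole, t => t
  | .elimTop K u, t => .elimTop (fill K t) u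
  | .elimBot K, t => .elimBot (fill K t)
  | .app K s, t => .app (fill K t) s
  | .elimConj1 K x r, t => .elimConj1 (fill K t) x r
  | .elimConj2 K x r, t => .elimConj2 (fill K t) x r
  | .elimDisj K x r y s, t => .elimDisj (fill K t) x r y s

/-- Well-formedness side conditions of an elimination context. -/
def WF : ECtx S → Prop
  | .hole => True
  | .elimTop K u => WF K ∧ Closed u
  | .elimBot K => WF K
  | .app K s => WF K ∧ Closed s
  | .elimConj1 K x r => WF K ∧ r.fv ⊆ {x}
  | .elimConj2 K x r => WF K ∧ r.fv ⊆ {x}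
  | .elimDisj K x r y s => WF K ∧ r.fv ⊆ {x} ∧ s.fv ⊆ {y}

/-- The size μ of an elimination context (the hole counting 0). -/
def muE : ECtx S → ℕ
  | .hole => 0
  | .elimTop K u => 1 + muE K + mu u
  | .elimBot K => 1 + muE K
  | .app K s => 1 + muE K + mu s
  | .elimConj1 K _ r => 1 + muE K + mu r
  | .elimConj2 K _ r => 1 + muE K + mu r
  | .elimDisj K _ r _ s => 1 + muE K + max (mu r) (mu s)

end ECtx

/-- Typing of elimination contexts: `ETypes B K A` means `_:B ⊢ K : A`. -/
inductive ETypes : Prp → ECtx S → Prp → Prop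
  | hole : ETypes B .hole B
  | elimTop : ETypes B K .top → Types 0 u A → ETypes B (.elimTop K u) A
  | elimBot : ETypes B K .bot → ETypes B (.elimBot K) C
  | app : ETypes B K (.imp D A) → Types 0 s D → ETypes B (.app K s) A
  | elimConj1 : ETypes B K (.conj D E) → Types {(x, D)} r C → ETypes B (.elimConj1 K x r) C
  | elimConj2 : ETypes B K (.conj D E) → Types {(x, E)} r C → ETypes B (.elimConj2 K x r) C
  | elimDisj : ETypes B K (.disj D E) → Types {(x, D)} r C → Types {(y, E)} s C →
      ETypes B (.elimDisj K x r y s) C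

/-- A proof-term is an introduction. -/
def IsIntro : Tm S → Prop
  | .star _ => True
  | .lam _ _ => True
  | .pair _ _ => True
  | .inl _ => True
  | .inr _ => True
  | _ => False

end LS

/-!
Induction on `A ∈ 𝒱`, with `M` given as the list of its rows. For `A = ⊤` the matrix is a
column `m`, and `λx. δ⊤(x, canon B m)` applied to `⋆a` reduces to `a • canon B m`, hence to
`canon B (a m)`. For `A = A₁ ∧ A₂` split `M = [M₁ | M₂]` and `u = (u₁, u₂)`, so that
`M u = M₁ u₁ + M₂ u₂`: the term projects its argument on both components, applies the
representations of the two blocks, and the sum of two canonical proofs reduces to the canonical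
proof of the sum of the vectors.
-/

namespace LS

variable {S : Type}

theorem Tm.subst_of_notMem_fv {u : Tm S} {x : ℕ} {t : Tm S} (h : x ∉ t.fv) :
    Tm.subst u x t = t := by
  induction t with
  | var y => simp_all [Tm.fv, Tm.subst, Ne.symm]
  | lam y t ih => by_cases y = x <;> simp_all [Tm.fv, Tm.subst, Ne.symm]
  | elimConj1 t y r iht ihr => by_cases y = x <;> simp_all [Tm.fv, Tm.subst, Ne.symm]
  | elimConj2 t y r iht ihr => by_cases y = x <;> simp_all [Tm.fv, Tm.subst, Ne.symm]
  | elimDisj t y r z s iht ihr ihs =>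
      by_cases y = x <;> by_cases z = x <;> simp_all [Tm.fv, Tm.subst, Ne.symm]
  | _ => simp_all [Tm.fv, Tm.subst]

theorem Tm.subst_of_closed {u t : Tm S} {x : ℕ} (h : Closed t) : Tm.subst u x t = t :=
  Tm.subst_of_notMem_fv (by simp [show t.fv = ∅ from h])

theorem Types.app_var {t : Tm S} {A B : Prp} (ht : Types 0 t (.imp A B)) (x : ℕ) :
    Types ((x, A) ::ₘ 0) (.app t (.var x)) B := by
  simpa using ht.app (.ax x A)

variable [Field S]

theorem Reds.sum {t t' u u' : Tm S} (ht : Reds t t') (hu : Reds u u') :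
    Reds (.sum t u) (.sum t' u') :=
  (ht.lift _ fun _ _ => Red.sumL).trans (hu.lift _ fun _ _ => Red.sumR)

theorem Reds.pair {t t' u u' : Tm S} (ht : Reds t t') (hu : Reds u u') :
    Reds (.pair t u) (.pair t' u') :=
  (ht.lift _ fun _ _ => Red.pairL).trans (hu.lift _ fun _ _ => Red.pairR)

theorem closed_canon (A : Prp) (l : List S) : Closed (canon A l) := by
  induction A generalizing l <;> simp_all [Closed, canon, Tm.fv]

theorem types_canon {A : Prp} (hA : InV A) (l : List S) : Types 0 (canon A l) A := by
  induction hA generalizing l with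
  | top => exact .star _
  | conj _ _ ih₁ ih₂ => exact .pair (ih₁ _) (ih₂ _)

theorem denotes_canon {A : Prp} (hA : InV A) {l : List S} (hl : l.length = dim A) :
    Denotes (canon A l) l := by
  induction hA generalizing l with
  | top =>
    obtain ⟨a, rfl⟩ := List.length_eq_one_iff.mp hl
    exact .star a
  | @conj A₁ A₂ _ _ ih₁ ih₂ =>
    simp only [dim] at hl
    simpa [canon] using Denotes.pair (ih₁ (l := l.take (dim A₁)) (by simp; omega))
      (ih₂ (l := l.drop (dim A₁)) (by simp; omega))

theorem Reds.scal_canon {A : Prp} (hA : InV A) (a : S) (l : List S) :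
    Reds (.scal a (canon A l)) (canon A (l.map (a * ·))) := by
  induction hA generalizing l with
  | top =>
    have h : Reds (.scal a (.star (l.headD 0))) (.star (a * l.headD 0)) := .single .scalStar
    cases l <;> simpa [canon] using h
  | conj _ _ ih₁ ih₂ =>
    simpa [canon, ← List.map_take, ← List.map_drop] using
      Relation.ReflTransGen.head Red.scalPair (Reds.pair (ih₁ _) (ih₂ _))

theorem Reds.sum_canon {A : Prp} (hA : InV A) {v w : List S} (hv : v.length = dim A)
    (hw : w.length = dim A) :
    Reds (.sum (canon A v) (canon A w)) (canon A (List.zipWith (· + ·) v w)) := by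
  induction hA generalizing v w with
  | top =>
    obtain ⟨a, rfl⟩ := List.length_eq_one_iff.mp hv
    obtain ⟨b, rfl⟩ := List.length_eq_one_iff.mp hw
    exact .single .sumStar
  | @conj A₁ A₂ _ _ ih₁ ih₂ =>
    simp only [dim] at hv hw
    simpa [canon, List.take_zipWith, List.drop_zipWith] using
      Relation.ReflTransGen.head Red.sumPair
        (Reds.pair (ih₁ (v := v.take (dim A₁)) (w := w.take (dim A₁)) (by simp; omega)
          (by simp; omega)) (ih₂ (v := v.drop (dim A₁)) (w := w.drop (dim A₁)) (by simp; omega)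
          (by simp; omega)))

def listMulVec (M : List (List S)) (u : List S) : List S :=
  M.map fun row => (List.zipWith (· * ·) row u).sum

theorem listMulVec_singleton {M : List (List S)} (hcols : ∀ row ∈ M, row.length = 1) (a : S) :
    listMulVec M [a] = (M.map (·.headD 0)).map (a * ·) := by
  simp only [listMulVec, List.map_map]
  refine List.map_congr_left fun row hrow => ?_
  obtain ⟨c, rfl⟩ := List.length_eq_one_iff.mp (hcols row hrow)
  simp [mul_comm]

theorem listMulVec_eq_zipWith_blocks {M : List (List S)} {u : List S} {k : ℕ}
    (hcols : ∀ row ∈ M, k ≤ row.length) (hu : k ≤ u.length) :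
    listMulVec M u = List.zipWith (· + ·) (listMulVec (M.map (·.take k)) (u.take k))
      (listMulVec (M.map (·.drop k)) (u.drop k)) := by
  simp only [listMulVec, List.map_map, List.zipWith_map, List.zipWith_self]
  refine List.map_congr_left fun row hrow => ?_
  conv_lhs => rw [← List.take_append_drop k row, ← List.take_append_drop k u]
  rw [List.zipWith_append (by simp [hcols row hrow, hu]), List.sum_append]
  rfl

def matrixTerm (B : Prp) : Prp → List (List S) → Tm S
  | .conj A₁ A₂, M => .lam 0 (.sum
      (.elimConj1 (.var 0) 1 (.app (matrixTerm B A₁ (M.map (·.take (dim A₁)))) (.var 1)))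
      (.elimConj2 (.var 0) 1 (.app (matrixTerm B A₂ (M.map (·.drop (dim A₁)))) (.var 1))))
  | _, M => .lam 0 (.elimTop (.var 0) (canon B (M.map (·.headD 0))))

theorem closed_matrixTerm (B A : Prp) (M : List (List S)) : Closed (matrixTerm B A M) := by
  have := closed_canon (S := S) B
  induction A generalizing M <;> simp_all [Closed, matrixTerm, Tm.fv]

theorem types_matrixTerm {A B : Prp} (hA : InV A) (hB : InV B) (M : List (List S)) :
    Types 0 (matrixTerm B A M) (.imp A B) := by
  induction hA generalizing M with
  | top => exact .lam (by simpa using .elimTop (Δ := 0) (.ax 0 .top) (types_canon hB _))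
  | @conj A₁ A₂ _ _ ih₁ ih₂ =>
    refine .lam (.sum ?_ ?_)
    · simpa using .elimConj1 (Δ := 0) (.ax 0 (.conj A₁ A₂)) ((ih₁ _).app_var 1)
    · simpa using .elimConj2 (Δ := 0) (.ax 0 (.conj A₁ A₂)) ((ih₂ _).app_var 1)

theorem reds_app_matrixTerm {A B : Prp} (hA : InV A) (hB : InV B) {M : List (List S)}
    (hrows : M.length = dim B) (hcols : ∀ row ∈ M, row.length = dim A) {u : List S}
    (hu : u.length = dim A) :
    Reds (.app (matrixTerm B A M) (canon A u)) (canon B (listMulVec M u)) := by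
  induction hA generalizing M u with
  | top =>
    obtain ⟨a, rfl⟩ := List.length_eq_one_iff.mp hu
    have hβ : Red (.app (matrixTerm B .top M) (canon .top [a]))
        (.elimTop (.star a) (canon B (M.map (·.headD 0)))) := by
      show Red (.app (.lam 0 (.elimTop (.var 0) (canon B (M.map (·.headD 0))))) (.star a)) _
      convert Red.beta using 1
      simp [Tm.subst, Tm.subst_of_closed (closed_canon _ _)]
    rw [listMulVec_singleton hcols]
    exact .head hβ (.head .elimTopStar (Reds.scal_canon hB a _))
  | @conj A₁ A₂ _ _ ih₁ ih₂ =>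
    simp only [dim] at hcols hu
    set t₁ := matrixTerm B A₁ (M.map (·.take (dim A₁)))
    set t₂ := matrixTerm B A₂ (M.map (·.drop (dim A₁)))
    set c₁ := canon A₁ (u.take (dim A₁))
    set c₂ := canon A₂ (u.drop (dim A₁))
    have ht₁ : Closed t₁ := closed_matrixTerm _ _ _
    have ht₂ : Closed t₂ := closed_matrixTerm _ _ _
    have hβ : Red (.app (matrixTerm B (.conj A₁ A₂) M) (canon (.conj A₁ A₂) u))
        (.sum (.elimConj1 (.pair c₁ c₂) 1 (.app t₁ (.var 1)))
          (.elimConj2 (.pair c₁ c₂) 1 (.app t₂ (.var 1)))) := by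
      show Red (.app (.lam 0 (.sum (.elimConj1 (.var 0) 1 (.app t₁ (.var 1)))
        (.elimConj2 (.var 0) 1 (.app t₂ (.var 1))))) (.pair c₁ c₂)) _
      convert Red.beta using 1
      simp [Tm.subst, Tm.subst_of_closed ht₁, Tm.subst_of_closed ht₂]
    have hπ₁ : Red (.elimConj1 (.pair c₁ c₂) 1 (.app t₁ (.var 1))) (.app t₁ c₁) := by
      convert Red.elimConj1Pair using 1
      simp [Tm.subst, Tm.subst_of_closed ht₁]
    have hπ₂ : Red (.elimConj2 (.pair c₁ c₂) 1 (.app t₂ (.var 1))) (.app t₂ c₂) := by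
      convert Red.elimConj2Pair using 1
      simp [Tm.subst, Tm.subst_of_closed ht₂]
    rw [listMulVec_eq_zipWith_blocks (k := dim A₁)
      (fun row hrow => by simp [hcols row hrow]) (by omega)]
    refine .head hβ ((Reds.sum (.single hπ₁) (.single hπ₂)).trans
      ((Reds.sum (ih₁ ?_ ?_ ?_) (ih₂ ?_ ?_ ?_)).trans (Reds.sum_canon hB ?_ ?_))) <;>
      simp_all [listMulVec]

end LS

/-- Matrix representation: any matrix with `dim A` columns and `dim B` rows over `S`
is expressed by a closed proof of `A ⇒ B`. -/
theorem LS.matrices {S : Type} [Field S] {A B : LS.Prp} (hA : LS.InV A) (hB : LS.InV B)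
    (M : List (List S)) (hrows : M.length = LS.dim B)
    (hcols : ∀ row ∈ M, row.length = LS.dim A) :
    ∃ t : LS.Tm S, LS.Types 0 t (.imp A B) ∧
      ∀ u : List S, u.length = LS.dim A →
        LS.Den (.app t (LS.canon A u))
          (M.map fun row => (List.zipWith (· * ·) row u).sum) :=
  ⟨LS.matrixTerm B A M, LS.types_matrixTerm hA hB M, fun _ hu =>
    ⟨_, LS.reds_app_matrixTerm hA hB hrows hcols hu,
      LS.denotes_canon hB (by simp [LS.listMulVec, hrows])⟩⟩
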